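/- There exists a universal constant C > 0 such that the following holds. Let a, b > 0 with 2a ≤ b, and let f: [0, b] → ℝ be continuously differentiable with f ≥ 0, f(b) = 1, and f(r) ≥ (1 − a³/r³)/(1 − a³/b³) for all r ∈ [a, b]. Then ∫₀^b r² f(r) f'(r) dr ≤ C a². -/

import Mathlib

open MeasureTheory intervalIntegral

/-! Integrating by parts, `∫₀^b r² f f' = b²/2 - ∫₀^b r f²` since `f(b) = 1`. The hypothesis
gives `f(r) ≥ 1 - a³/r³ ≥ 0` on `[a, b]`, so `r f² ≥ r (1 - a³/r³)² ≥ r - 2a³/r²` there, and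
integrating over `[a, b]` yields `∫₀^b r f² ≥ b²/2 - 5a²/2`, i.e. the bound with `C = 5/2`. -/

theorem integral_sq_mul_mul_deriv {f f' : ℝ → ℝ} {a b : ℝ}
    (hf : ∀ r ∈ Set.uIcc a b, HasDerivAt f (f' r) r) (hf' : IntervalIntegrable f' volume a b) :
    ∫ r in a..b, r ^ 2 * f r * f' r =
      (b ^ 2 * f b ^ 2 - a ^ 2 * f a ^ 2) / 2 - ∫ r in a..b, r * f r ^ 2 := by
  have hfc : ContinuousOn f (Set.uIcc a b) := fun r hr =>
    (hf r hr).continuousAt.continuousWithinAt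
  have hi₁ : IntervalIntegrable (fun r => r ^ 2 * f r * f' r) volume a b :=
    hf'.continuousOn_mul (by fun_prop)
  have hi₂ : IntervalIntegrable (fun r => r * f r ^ 2) volume a b :=
    (by fun_prop : ContinuousOn (fun r => r * f r ^ 2) _).intervalIntegrable
  have hderiv : ∀ r ∈ Set.uIcc a b, HasDerivAt (fun r => r ^ 2 * f r ^ 2 / 2)
      (r ^ 2 * f r * f' r + r * f r ^ 2) r := fun r hr => by
    refine (((hasDerivAt_pow 2 r).fun_mul ((hf r hr).fun_pow 2)).div_const 2).congr_deriv ?_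
    push_cast
    ring
  rw [eq_sub_iff_add_eq, ← integral_add hi₁ hi₂,
    integral_eq_sub_of_hasDerivAt hderiv (hi₁.add hi₂)]
  ring

theorem integral_sub_div_sq {a b : ℝ} (c : ℝ) (ha : 0 < a) (hab : a ≤ b) :
    ∫ r in a..b, (r - c / r ^ 2) = (b ^ 2 - a ^ 2) / 2 + c / b - c / a := by
  have hpos : ∀ r ∈ Set.uIcc a b, 0 < r := fun r hr =>
    ha.trans_le (Set.uIcc_of_le hab ▸ hr).1
  have hderiv : ∀ r ∈ Set.uIcc a b, HasDerivAt (fun r => r ^ 2 / 2 + c / r) (r - c / r ^ 2) r :=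
    fun r hr => by
      refine (((hasDerivAt_pow 2 r).div_const 2).fun_add
        ((hasDerivAt_inv (hpos r hr).ne').const_mul c)).congr_deriv ?_
      push_cast
      ring
  have hcont : ContinuousOn (fun r => r - c / r ^ 2) (Set.uIcc a b) :=
    continuousOn_id.sub (continuousOn_const.div (by fun_prop) fun r hr =>
      (pow_pos (hpos r hr) 2).ne')
  rw [integral_eq_sub_of_hasDerivAt hderiv hcont.intervalIntegrable]
  ring

theorem one_sub_div_pow_nonneg {a r : ℝ} (n : ℕ) (ha : 0 ≤ a) (har : a ≤ r) :
    0 ≤ 1 - a ^ n / r ^ n :=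
  sub_nonneg.2 (div_le_one_of_le₀ (pow_le_pow_left₀ ha har n) (pow_nonneg (ha.trans har) n))

theorem sub_two_mul_div_sq_le_mul_sq {c r y : ℝ} (hr : 0 < r) (h₀ : 0 ≤ 1 - c / r ^ 3)
    (hy : 1 - c / r ^ 3 ≤ y) : r - 2 * c / r ^ 2 ≤ r * y ^ 2 :=
  calc r - 2 * c / r ^ 2 ≤ r - 2 * c / r ^ 2 + c ^ 2 / r ^ 5 := by
        have : 0 ≤ c ^ 2 / r ^ 5 := by positivity
        linarith
    _ = r * (1 - c / r ^ 3) ^ 2 := by field_simp; ring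
    _ ≤ r * y ^ 2 := by gcongr

theorem sub_le_integral_mul_sq {f : ℝ → ℝ} {a b : ℝ} (ha : 0 < a) (hab : a ≤ b)
    (hf : ContinuousOn f (Set.Icc 0 b)) (hfa : ∀ r ∈ Set.Icc a b, 1 - a ^ 3 / r ^ 3 ≤ f r) :
    (b ^ 2 - a ^ 2) / 2 + 2 * a ^ 3 / b - 2 * a ^ 2 ≤ ∫ r in (0 : ℝ)..b, r * f r ^ 2 := by
  have hb : 0 ≤ b := ha.le.trans hab
  have hi : IntervalIntegrable (fun r => r * f r ^ 2) volume 0 b :=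
    (by fun_prop : ContinuousOn (fun r => r * f r ^ 2) _).intervalIntegrable_of_Icc hb
  have hpoint : ∀ r ∈ Set.Icc a b, r - 2 * a ^ 3 / r ^ 2 ≤ r * f r ^ 2 := fun r hr =>
    sub_two_mul_div_sq_le_mul_sq (ha.trans_le hr.1) (one_sub_div_pow_nonneg 3 ha.le hr.1)
      (hfa r hr)
  have hcont : ContinuousOn (fun r => r - 2 * a ^ 3 / r ^ 2) (Set.Icc a b) :=
    continuousOn_id.sub (continuousOn_const.div (by fun_prop) fun r hr =>
      (pow_pos (ha.trans_le hr.1) 2).ne')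
  calc (b ^ 2 - a ^ 2) / 2 + 2 * a ^ 3 / b - 2 * a ^ 2
      = ∫ r in a..b, (r - 2 * a ^ 3 / r ^ 2) := by
        rw [integral_sub_div_sq _ ha hab]; field_simp
    _ ≤ ∫ r in a..b, r * f r ^ 2 :=
        integral_mono_on hab (hcont.intervalIntegrable_of_Icc hab)
          (hi.mono_set (Set.uIcc_subset_uIcc (Set.mem_uIcc_of_le ha.le hab) Set.right_mem_uIcc))
          hpoint
    _ ≤ ∫ r in (0 : ℝ)..b, r * f r ^ 2 :=
        integral_mono_interval ha.le hab le_rfl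
          (ae_restrict_of_forall_mem measurableSet_Ioc fun r hr => by have := hr.1; positivity) hi

/-- There is a universal constant `C > 0` such that for all `0 < a`,
`0 < b` with `2a ≤ b` and every continuously differentiable `f : [0,b] → ℝ` (with derivative
`f'`) satisfying `f ≥ 0`, `f(b) = 1` and `f(r) ≥ (1 − a³/r³)/(1 − a³/b³)` on `[a,b]`, one has
`∫₀^b r² f(r) f'(r) dr ≤ C a²`. -/
theorem radial_integral_f_deriv_le_p_wave :
    ∃ C > (0 : ℝ), ∀ (a b : ℝ) (f f' : ℝ → ℝ),
      0 < a → 0 < b → 2 * a ≤ b →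
      (∀ r ∈ Set.Icc (0 : ℝ) b, HasDerivAt f (f' r) r) →
      ContinuousOn f' (Set.Icc (0 : ℝ) b) →
      (∀ r ∈ Set.Icc (0 : ℝ) b, 0 ≤ f r) →
      f b = 1 →
      (∀ r ∈ Set.Icc a b, (1 - a ^ 3 / r ^ 3) / (1 - a ^ 3 / b ^ 3) ≤ f r) →
      (∫ r in (0 : ℝ)..b, r ^ 2 * f r * f' r) ≤ C * a ^ 2 := by
  refine ⟨5 / 2, by norm_num, fun a b f f' ha hb hab hf hf' _ hfb hfa => ?_⟩
  have hab' : a ≤ b := by linarith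
  have hden : 0 < 1 - a ^ 3 / b ^ 3 := by
    rw [sub_pos, div_lt_one (by positivity)]
    exact pow_lt_pow_left₀ (by linarith) ha.le three_ne_zero
  have hfa' : ∀ r ∈ Set.Icc a b, 1 - a ^ 3 / r ^ 3 ≤ f r := fun r hr =>
    (le_div_self (one_sub_div_pow_nonneg 3 ha.le hr.1) hden
      (sub_le_self _ (by positivity))).trans (hfa r hr)
  have hIcc : Set.uIcc 0 b = Set.Icc 0 b := Set.uIcc_of_le hb.le
  have hparts := integral_sq_mul_mul_deriv (hIcc ▸ hf) (hf'.intervalIntegrable_of_Icc hb.le)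
  have hlower := sub_le_integral_mul_sq ha hab'
    (fun r hr => (hf r hr).continuousAt.continuousWithinAt) hfa'
  have hcorr : 0 ≤ 2 * a ^ 3 / b := by positivity
  rw [hparts, hfb]
  linarith
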